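/- arXiv:2008.00822 — 3 statements merged into one kernel-verified Lean document; each statement's English description precedes it below -/
import Mathlib

section
/- (Proposition 2, part 1, in contracted form.) Let g be a pointwise-hermitian C¹ metric on ℂⁿ with real and imaginary parts g = g^R + i·g^I. Then at every point, for every index γ and every real vector u ∈ ℝⁿ: Σ_{α,β} (∂_γ̄ g_{αβ̄} − ∂_β̄ g_{αγ̄} − ∂_α g_{βγ̄}) u^α u^β = Σ_{α,β} (Φ^{γ++}_{αβ} + i·Φ^{γ+-}_{αβ} + (i/2)·∂^t_γ g^R_{αβ̄}) u^α u^β. -/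
open Complex

noncomputable section

/-- The `α`-th standard basis vector of `ℂⁿ`. -/
def eV (n : ℕ) (α : Fin n) : Fin n → ℂ := fun i => if i = α then 1 else 0

/-- `∂^x_α`: partial derivative of `f : ℂⁿ → ℂ` at `z` in the real direction `x^α`. -/
def dX {n : ℕ} (α : Fin n) (f : (Fin n → ℂ) → ℂ) (z : Fin n → ℂ) : ℂ :=
  deriv (fun s : ℝ => f (fun i => z i + (s : ℂ) * eV n α i)) 0

/-- `∂^t_α`: partial derivative of `f : ℂⁿ → ℂ` at `z` in the imaginary direction `t^α`. -/
def dT {n : ℕ} (α : Fin n) (f : (Fin n → ℂ) → ℂ) (z : Fin n → ℂ) : ℂ :=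
  deriv (fun s : ℝ => f (fun i => z i + (s : ℂ) * Complex.I * eV n α i)) 0

/-- Wirtinger derivative `∂_α = ½(∂^x_α − i ∂^t_α)`. -/
def dW {n : ℕ} (α : Fin n) (f : (Fin n → ℂ) → ℂ) (z : Fin n → ℂ) : ℂ :=
  (dX α f z - Complex.I * dT α f z) / 2

/-- Conjugate Wirtinger derivative `∂_ᾱ = ½(∂^x_α + i ∂^t_α)`. -/
def dWbar {n : ℕ} (α : Fin n) (f : (Fin n → ℂ) → ℂ) (z : Fin n → ℂ) : ℂ :=
  (dX α f z + Complex.I * dT α f z) / 2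

/-- The `(i,j)` entry of the metric, as a `ℂ`-valued function `g_{i j̄}`. -/
def gF {n : ℕ} (g : (Fin n → ℂ) → Matrix (Fin n) (Fin n) ℂ) (i j : Fin n) :
    (Fin n → ℂ) → ℂ := fun z => g z i j

/-- The real part `g^R_{i j̄}` of the metric entry, coerced into `ℂ`. -/
def gR {n : ℕ} (g : (Fin n → ℂ) → Matrix (Fin n) (Fin n) ℂ) (i j : Fin n) :
    (Fin n → ℂ) → ℂ := fun z => ((g z i j).re : ℂ)

/-- The imaginary part `g^I_{i j̄}` of the metric entry, coerced into `ℂ`. -/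
def gI {n : ℕ} (g : (Fin n → ℂ) → Matrix (Fin n) (Fin n) ℂ) (i j : Fin n) :
    (Fin n → ℂ) → ℂ := fun z => ((g z i j).im : ℂ)

/-- `g` is pointwise hermitian: `g_{αβ̄} = conj (g_{βᾱ})`. -/
def IsHermitianMetric {n : ℕ} (g : (Fin n → ℂ) → Matrix (Fin n) (Fin n) ℂ) : Prop :=
  ∀ z i j, g z i j = (starRingEnd ℂ) (g z j i)

/-- `g` is continuously differentiable (entrywise, as a map over `ℝ`). -/
def MetricC1 {n : ℕ} (g : (Fin n → ℂ) → Matrix (Fin n) (Fin n) ℂ) : Prop :=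
  ∀ i j, ContDiff ℝ 1 (gF g i j)

/-- Primary field `Φ^{γ++}_{αβ}`. -/
def PhiPP {n : ℕ} (g : (Fin n → ℂ) → Matrix (Fin n) (Fin n) ℂ) (γ α β : Fin n)
    (z : Fin n → ℂ) : ℂ :=
  (dX γ (gR g α β) z - dX α (gR g β γ) z - dX β (gR g α γ) z) / 2

/-- Primary field `Φ^{γ+-}_{αβ}`. -/
def PhiPM {n : ℕ} (g : (Fin n → ℂ) → Matrix (Fin n) (Fin n) ℂ) (γ α β : Fin n)
    (z : Fin n → ℂ) : ℂ :=
  (dX γ (gI g α β) z - dX α (gI g β γ) z - dX β (gI g α γ) z) / 2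

/-- Primary field `Φ^{γ-+}_{αβ}`. -/
def PhiMP {n : ℕ} (g : (Fin n → ℂ) → Matrix (Fin n) (Fin n) ℂ) (γ α β : Fin n)
    (z : Fin n → ℂ) : ℂ :=
  (dT γ (gR g α β) z - dT α (gR g β γ) z - dT β (gR g α γ) z) / 2

/-- Primary field `Φ^{γ--}_{αβ}`. -/
def PhiMM {n : ℕ} (g : (Fin n → ℂ) → Matrix (Fin n) (Fin n) ℂ) (γ α β : Fin n)
    (z : Fin n → ℂ) : ℂ :=
  (dT γ (gI g α β) z - dT α (gI g β γ) z - dT β (gI g α γ) z) / 2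

/-- Secondary field `F^x_{αγβ}`. -/
def Fx {n : ℕ} (g : (Fin n → ℂ) → Matrix (Fin n) (Fin n) ℂ) (α γ β : Fin n)
    (z : Fin n → ℂ) : ℂ :=
  dX γ (gI g α β) z - dX β (gI g α γ) z

/-- Secondary field `F^t_{αγβ}`. -/
def Ft {n : ℕ} (g : (Fin n → ℂ) → Matrix (Fin n) (Fin n) ℂ) (α γ β : Fin n)
    (z : Fin n → ℂ) : ℂ :=
  dT γ (gI g α β) z - dT β (gI g α γ) z

/-- The Lagrangian `L(z,v) = sqrt(Re Σ g_{αβ̄}(z) v^α conj(v^β))`. -/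
def Lag {n : ℕ} (g : (Fin n → ℂ) → Matrix (Fin n) (Fin n) ℂ) (z v : Fin n → ℂ) : ℝ :=
  Real.sqrt (∑ α, ∑ β, g z α β * v α * (starRingEnd ℂ) (v β)).re

/-- Wirtinger derivative with respect to `conj(v^γ)` of a real-valued function on `ℂⁿ`:
`½(∂/∂(Re v^γ) + i·∂/∂(Im v^γ))`. -/
def dWbarR {n : ℕ} (γ : Fin n) (f : (Fin n → ℂ) → ℝ) (v : Fin n → ℂ) : ℂ :=
  ((deriv (fun s : ℝ => f (fun i => v i + (s : ℂ) * eV n γ i)) 0 : ℝ) +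
    Complex.I *
      (deriv (fun s : ℝ => f (fun i => v i + (s : ℂ) * Complex.I * eV n γ i)) 0 : ℝ)) / 2

/-- The Lagrangian speed `L(σ)` of a curve `z : ℝ → ℂⁿ`. -/
def curveL {n : ℕ} (g : (Fin n → ℂ) → Matrix (Fin n) (Fin n) ℂ) (z : ℝ → Fin n → ℂ)
    (σ : ℝ) : ℝ :=
  Lag g (z σ) (fun α => deriv (fun τ => z τ α) σ)

/-- `Dz^α = (1/L)·dz^α/dσ`. -/
def Dz {n : ℕ} (g : (Fin n → ℂ) → Matrix (Fin n) (Fin n) ℂ) (z : ℝ → Fin n → ℂ)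
    (α : Fin n) (σ : ℝ) : ℂ :=
  (curveL g z σ : ℂ)⁻¹ * deriv (fun τ => z τ α) σ

/-- `D²z^α = (1/L)·d/dσ((1/L)·dz^α/dσ)`. -/
def D2z {n : ℕ} (g : (Fin n → ℂ) → Matrix (Fin n) (Fin n) ℂ) (z : ℝ → Fin n → ℂ)
    (α : Fin n) (σ : ℝ) : ℂ :=
  (curveL g z σ : ℂ)⁻¹ *
    deriv (fun τ => (curveL g z τ : ℂ)⁻¹ * deriv (fun s => z s α) τ) σ

/-- `Dx^α = (1/L)·dx^α/dσ`. -/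
def Dx {n : ℕ} (g : (Fin n → ℂ) → Matrix (Fin n) (Fin n) ℂ) (z : ℝ → Fin n → ℂ)
    (α : Fin n) (σ : ℝ) : ℝ :=
  (curveL g z σ)⁻¹ * deriv (fun τ => (z τ α).re) σ

/-- `Dt^α = (1/L)·dt^α/dσ`. -/
def Dt {n : ℕ} (g : (Fin n → ℂ) → Matrix (Fin n) (Fin n) ℂ) (z : ℝ → Fin n → ℂ)
    (α : Fin n) (σ : ℝ) : ℝ :=
  (curveL g z σ)⁻¹ * deriv (fun τ => (z τ α).im) σ

/-- `D²x^α = (1/L)·d/dσ((1/L)·dx^α/dσ)`. -/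
def D2x {n : ℕ} (g : (Fin n → ℂ) → Matrix (Fin n) (Fin n) ℂ) (z : ℝ → Fin n → ℂ)
    (α : Fin n) (σ : ℝ) : ℝ :=
  (curveL g z σ)⁻¹ *
    deriv (fun τ => (curveL g z τ)⁻¹ * deriv (fun s => (z s α).re) τ) σ

/-- `D²t^α = (1/L)·d/dσ((1/L)·dt^α/dσ)`. -/
def D2t {n : ℕ} (g : (Fin n → ℂ) → Matrix (Fin n) (Fin n) ℂ) (z : ℝ → Fin n → ℂ)
    (α : Fin n) (σ : ℝ) : ℝ :=
  (curveL g z σ)⁻¹ *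
    deriv (fun τ => (curveL g z τ)⁻¹ * deriv (fun s => (z s α).im) τ) σ

/-- The complex geodesic equation (Theorem 1's equation) for the curve `z`. -/
def GeodesicEq {n : ℕ} (g : (Fin n → ℂ) → Matrix (Fin n) (Fin n) ℂ)
    (z : ℝ → Fin n → ℂ) : Prop :=
  ∀ (γ : Fin n) (σ : ℝ),
    ∑ μ, g (z σ) μ γ * D2z g z μ σ =
      (∑ α, ∑ β, (dWbar γ (gF g α β) (z σ) - dWbar β (gF g α γ) (z σ)) *
          Dz g z α σ * (starRingEnd ℂ) (Dz g z β σ)) -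
        ∑ α, ∑ β, dW α (gF g β γ) (z σ) * Dz g z α σ * Dz g z β σ

/-- The real part of the metric as a real matrix. -/
def gRmat {n : ℕ} (g : (Fin n → ℂ) → Matrix (Fin n) (Fin n) ℂ) (z : Fin n → ℂ) :
    Matrix (Fin n) (Fin n) ℝ :=
  Matrix.of fun i j => (g z i j).re

/-- The link tensor `ε^η_γ = Σ_ν g^I_{νγ̄} ((g^R)⁻¹)_{νη}`. -/
def eps {n : ℕ} (g : (Fin n → ℂ) → Matrix (Fin n) (Fin n) ℂ) (z : Fin n → ℂ)
    (η γ : Fin n) : ℝ :=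
  ∑ ν, (g z ν γ).im * (gRmat g z)⁻¹ ν η

/-! Writing `∂_ᾱ`, `∂_α` through `∂^x`, `∂^t` and splitting each entry `g = g^R + i g^I`
expresses the left-hand coefficient through x- and t-derivatives of `g^R` and `g^I`.
Contracted with `u^α u^β` only its symmetrization in `(α, β)` matters, and since the metric is
hermitian, `g^R` is symmetric and `g^I` antisymmetric. Under symmetrization the t-derivatives
`∂^t_β g_{αγ̄}` and `∂^t_α g_{βγ̄}` then cancel, as does `∂^t_γ g^I_{αβ̄}`; what survives is
the right-hand side. -/

theorem Finset.sum_sum_mul_mul_eq_of_add_transpose_eq {ι R : Type*} [Fintype ι] [CommRing R]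
    [IsDomain R] [NeZero (2 : R)] (v : ι → R) {F G : ι → ι → R}
    (h : ∀ a b, F a b + F b a = G a b + G b a) :
    ∑ a, ∑ b, F a b * v a * v b = ∑ a, ∑ b, G a b * v a * v b := by
  have transpose : ∀ H : ι → ι → R,
      ∑ a, ∑ b, H b a * v a * v b = ∑ a, ∑ b, H a b * v a * v b := fun H => by
    rw [Finset.sum_comm]
    exact Finset.sum_congr rfl fun a _ => Finset.sum_congr rfl fun b _ => by ring
  have two_mul_eq : ∀ H : ι → ι → R,
      2 * ∑ a, ∑ b, H a b * v a * v b = ∑ a, ∑ b, (H a b + H b a) * v a * v b := fun H => by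
    simp only [add_mul, Finset.sum_add_distrib, transpose H, two_mul]
  refine mul_left_cancel₀ (two_ne_zero (α := R)) ?_
  simp only [two_mul_eq, h]

theorem deriv_eq_deriv_re_add_I_mul_deriv_im {f : ℝ → ℂ} {x : ℝ}
    (hf : DifferentiableAt ℝ f x) :
    deriv f x = deriv (fun s => ((f s).re : ℂ)) x + I * deriv (fun s => ((f s).im : ℂ)) x := by
  have hre : HasDerivAt (fun s => ((f s).re : ℂ)) ((deriv f x).re : ℂ) x :=
    (ofRealCLM.comp reCLM).hasFDerivAt.comp_hasDerivAt x hf.hasDerivAt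
  have him : HasDerivAt (fun s => ((f s).im : ℂ)) ((deriv f x).im : ℂ) x :=
    (ofRealCLM.comp imCLM).hasFDerivAt.comp_hasDerivAt x hf.hasDerivAt
  rw [hre.deriv, him.deriv]
  simpa [mul_comm] using (re_add_im (deriv f x)).symm

section Metric

variable {n : ℕ} {g : (Fin n → ℂ) → Matrix (Fin n) (Fin n) ℂ}

theorem dX_gF (hg : MetricC1 g) (a b μ : Fin n) (z : Fin n → ℂ) :
    dX μ (gF g a b) z = dX μ (gR g a b) z + I * dX μ (gI g a b) z :=
  deriv_eq_deriv_re_add_I_mul_deriv_im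
    ((((hg a b).differentiable one_ne_zero).comp (by fun_prop)).differentiableAt)

theorem dT_gF (hg : MetricC1 g) (a b μ : Fin n) (z : Fin n → ℂ) :
    dT μ (gF g a b) z = dT μ (gR g a b) z + I * dT μ (gI g a b) z :=
  deriv_eq_deriv_re_add_I_mul_deriv_im
    ((((hg a b).differentiable one_ne_zero).comp (by fun_prop)).differentiableAt)

theorem IsHermitianMetric.gR_symm (hherm : IsHermitianMetric g) (a b : Fin n) :
    gR g b a = gR g a b := by
  funext w
  simp [gR, hherm w a b]

theorem IsHermitianMetric.gI_antisymm (hherm : IsHermitianMetric g) (a b : Fin n) :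
    gI g b a = fun w => -gI g a b w := by
  funext w
  simp [gI, hherm w a b]

end Metric

theorem dX_neg {n : ℕ} (μ : Fin n) (f : (Fin n → ℂ) → ℂ) (z : Fin n → ℂ) :
    dX μ (fun w => -f w) z = -dX μ f z :=
  deriv.neg

theorem dT_neg {n : ℕ} (μ : Fin n) (f : (Fin n → ℂ) → ℂ) (z : Fin n → ℂ) :
    dT μ (fun w => -f w) z = -dT μ f z :=
  deriv.neg

/-- Proposition 2, part 1 (contracted with a real vector `u`):
`Σ (∂_γ̄ g_{αβ̄} − ∂_β̄ g_{αγ̄} − ∂_α g_{βγ̄}) u^α u^β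
  = Σ (Φ^{γ++} + i Φ^{γ+-} + (i/2) ∂^t_γ g^R) u^α u^β`. -/
theorem prop2_part1 {n : ℕ} (g : (Fin n → ℂ) → Matrix (Fin n) (Fin n) ℂ)
    (hg : MetricC1 g) (hherm : IsHermitianMetric g)
    (z : Fin n → ℂ) (γ : Fin n) (u : Fin n → ℝ) :
    ∑ α, ∑ β,
        (dWbar γ (gF g α β) z - dWbar β (gF g α γ) z - dW α (gF g β γ) z) *
          (u α : ℂ) * (u β : ℂ) =
      ∑ α, ∑ β,
        (PhiPP g γ α β z + Complex.I * PhiPM g γ α β z +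
            Complex.I / 2 * dT γ (gR g α β) z) *
          (u α : ℂ) * (u β : ℂ) := by
  refine Finset.sum_sum_mul_mul_eq_of_add_transpose_eq (fun a => (u a : ℂ)) fun a b => ?_
  simp only [dWbar, dW, PhiPP, PhiPM, dX_gF hg, dT_gF hg, hherm.gR_symm a b,
    hherm.gI_antisymm a b, dX_neg, dT_neg]
  ring
end
end

section
/- (Real part of the dual identity.) Let g be a pointwise-hermitian C¹ metric on ℂⁿ with g = g^R + i·g^I, and let z = x + it : ℝ → ℂⁿ be a C² curve with L(σ) > 0 satisfying the complex geodesic equation. Then for every index γ and every σ: Σ_μ g^R_{μγ̄}(z) D²x^μ − Σ_μ g^I_{μγ̄}(z) D²t^μ = Σ_{α,β} Φ^{γ++}_{αβ} Dx^α Dx^β + Σ_{α,β} (½·∂^x_γ g^R_{αβ̄} − Φ^{γ--}_{αβ}) Dt^α Dt^β − Σ_{α,β} (F^x_{αγβ} + ∂^t_α g^R_{βγ̄}) Dt^α Dx^β, all coefficient functions evaluated at z(σ). -/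
open Complex

noncomputable section

/-!
Take the real part of the geodesic equation. With `Dz = Dx + i Dt`, `D²z = D²x + i D²t` and the
Wirtinger derivatives expanded, its right-hand side becomes a real quadratic form in `(Dx, Dt)`.
Hermiticity makes `∂g^R` symmetric and `∂g^I` antisymmetric in the metric indices, so after
symmetrising the double sums the coefficients collapse to `Φ^{γ++}`, `½ ∂^x_γ g^R − Φ^{γ--}` and
`F^x + ∂^t g^R`.
-/

open scoped ComplexConjugate

section ComplexValuedCurves

variable {F : ℝ → ℂ} {F' : ℂ} {t : ℝ}

theorem HasDerivAt.complex_re (h : HasDerivAt F F' t) :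
    HasDerivAt (fun s => (F s).re) F'.re t :=
  reCLM.hasFDerivAt.comp_hasDerivAt t h

theorem HasDerivAt.complex_im (h : HasDerivAt F F' t) :
    HasDerivAt (fun s => (F s).im) F'.im t :=
  imCLM.hasFDerivAt.comp_hasDerivAt t h

theorem deriv_complex_re (h : DifferentiableAt ℝ F t) :
    deriv (fun s => (F s).re) t = (deriv F t).re :=
  h.hasDerivAt.complex_re.deriv

theorem deriv_complex_im (h : DifferentiableAt ℝ F t) :
    deriv (fun s => (F s).im) t = (deriv F t).im :=
  h.hasDerivAt.complex_im.deriv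

theorem deriv_ofReal_re (h : DifferentiableAt ℝ F t) :
    deriv (fun s => ((F s).re : ℂ)) t = (deriv F t).re :=
  h.hasDerivAt.complex_re.ofReal_comp.deriv

theorem deriv_ofReal_im (h : DifferentiableAt ℝ F t) :
    deriv (fun s => ((F s).im : ℂ)) t = (deriv F t).im :=
  h.hasDerivAt.complex_im.ofReal_comp.deriv

theorem deriv_eq_deriv_re_add_deriv_im_mul_I (h : DifferentiableAt ℝ F t) :
    deriv F t = deriv (fun s => (F s).re) t + deriv (fun s => (F s).im) t * I := by
  rw [deriv_complex_re h, deriv_complex_im h, re_add_im]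

end ComplexValuedCurves

theorem Finset.sum_sum_eq_zero_of_add_swap_eq_zero {ι M : Type*} [AddCommMonoid M]
    [IsAddTorsionFree M] (s : Finset ι) (f : ι → ι → M) (hf : ∀ a b, f a b + f b a = 0) :
    ∑ a ∈ s, ∑ b ∈ s, f a b = 0 := by
  rw [← two_nsmul_eq_zero, two_nsmul]
  nth_rewrite 2 [Finset.sum_comm]
  simp [← Finset.sum_add_distrib, hf]

/-- `X c i j` and `T c i j` play the roles of `∂^x_c g_{ij̄}` and `∂^t_c g_{ij̄}`; their hermitian
symmetry makes every antisymmetric part of the double sums cancel. -/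
theorem re_geodesic_rhs {ι : Type*} [Fintype ι] (X T : ι → ι → ι → ℂ)
    (hX : ∀ c i j, X c j i = conj (X c i j)) (hT : ∀ c i j, T c j i = conj (T c i j))
    (γ : ι) (u v : ι → ℝ) :
    ((∑ α, ∑ β, ((X γ α β + I * T γ α β) / 2 - (X β α γ + I * T β α γ) / 2) *
        (u α + v α * I) * conj (u β + v β * I)) -
      ∑ α, ∑ β, (X α β γ - I * T α β γ) / 2 * (u α + v α * I) * (u β + v β * I)).re =
    (∑ α, ∑ β, ((X γ α β).re - (X α β γ).re - (X β α γ).re) / 2 * u α * u β) +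
      (∑ α, ∑ β, ((X γ α β).re / 2 - ((T γ α β).im - (T α β γ).im - (T β α γ).im) / 2) *
        v α * v β) -
      ∑ α, ∑ β, ((X γ α β).im - (X β α γ).im + (T α β γ).re) * v α * u β := by
  simp only [sub_re, re_sum]
  rw [← sub_eq_zero]
  simp only [← Finset.sum_sub_distrib, ← Finset.sum_add_distrib]
  refine Finset.sum_sum_eq_zero_of_add_swap_eq_zero _ _ fun a b => ?_
  simp only [hX γ b a, hT γ b a, map_add, map_mul, conj_ofReal, conj_I, add_re, add_im,
    sub_re, sub_im, mul_re, mul_im, neg_re, neg_im, conj_re, conj_im, div_ofNat_re,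
    div_ofNat_im, ofReal_re, ofReal_im, I_re, I_im]
  ring

theorem re_sum_mul_ofReal_add_ofReal_mul_I {ι : Type*} (s : Finset ι) (G : ι → ℂ)
    (p q : ι → ℝ) :
    (∑ μ ∈ s, G μ * (p μ + q μ * I)).re =
      ∑ μ ∈ s, (G μ).re * p μ - ∑ μ ∈ s, (G μ).im * q μ := by
  simp [re_sum, Finset.sum_sub_distrib]

section MetricDerivatives

variable {n : ℕ} {g : (Fin n → ℂ) → Matrix (Fin n) (Fin n) ℂ}

theorem MetricC1.differentiable (hg : MetricC1 g) (i j : Fin n) :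
    Differentiable ℝ (gF g i j) :=
  (hg i j).differentiable one_ne_zero

theorem dX_gR (hg : MetricC1 g) (a i j : Fin n) (w : Fin n → ℂ) :
    dX a (gR g i j) w = (dX a (gF g i j) w).re :=
  deriv_ofReal_re <| (hg.differentiable i j).differentiableAt.comp (0 : ℝ) (by fun_prop)

theorem dX_gI (hg : MetricC1 g) (a i j : Fin n) (w : Fin n → ℂ) :
    dX a (gI g i j) w = (dX a (gF g i j) w).im :=
  deriv_ofReal_im <| (hg.differentiable i j).differentiableAt.comp (0 : ℝ) (by fun_prop)

theorem dT_gR (hg : MetricC1 g) (a i j : Fin n) (w : Fin n → ℂ) :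
    dT a (gR g i j) w = (dT a (gF g i j) w).re :=
  deriv_ofReal_re <| (hg.differentiable i j).differentiableAt.comp (0 : ℝ) (by fun_prop)

theorem dT_gI (hg : MetricC1 g) (a i j : Fin n) (w : Fin n → ℂ) :
    dT a (gI g i j) w = (dT a (gF g i j) w).im :=
  deriv_ofReal_im <| (hg.differentiable i j).differentiableAt.comp (0 : ℝ) (by fun_prop)

theorem IsHermitianMetric.dX_swap (hherm : IsHermitianMetric g) (a i j : Fin n)
    (w : Fin n → ℂ) : dX a (gF g j i) w = conj (dX a (gF g i j) w) := by
  simp only [dX, gF, hherm _ j i]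
  exact deriv.star

theorem IsHermitianMetric.dT_swap (hherm : IsHermitianMetric g) (a i j : Fin n)
    (w : Fin n → ℂ) : dT a (gF g j i) w = conj (dT a (gF g i j) w) := by
  simp only [dT, gF, hherm _ j i]
  exact deriv.star

end MetricDerivatives

section Curves

variable {n : ℕ} {g : (Fin n → ℂ) → Matrix (Fin n) (Fin n) ℂ} {z : ℝ → Fin n → ℂ}

theorem Dz_eq_Dx_add_Dt_mul_I (hz : Differentiable ℝ z) (a : Fin n) (σ : ℝ) :
    Dz g z a σ = Dx g z a σ + Dt g z a σ * I := by
  rw [Dz, Dx, Dt, deriv_eq_deriv_re_add_deriv_im_mul_I ((differentiable_pi.1 hz a) σ)]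
  push_cast
  ring

theorem curveL_differentiableAt (hg : MetricC1 g) (hz : ContDiff ℝ 2 z) {σ : ℝ}
    (hL : 0 < curveL g z σ) : DifferentiableAt ℝ (curveL g z) σ := by
  have hz' (a : Fin n) : Differentiable ℝ (deriv fun τ => z τ a) :=
    (contDiff_pi.1 hz a).differentiable_deriv_two
  have hgz (i j : Fin n) : Differentiable ℝ fun τ => g (z τ) i j :=
    (hg.differentiable i j).comp (hz.differentiable two_ne_zero)
  have hz'_conj (b : Fin n) : Differentiable ℝ fun τ => conj (deriv (fun s => z s b) τ) :=
    (hz' b).star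
  have hQ : Differentiable ℝ fun τ =>
      ∑ α, ∑ β, g (z τ) α β * deriv (fun s => z s α) τ * conj (deriv (fun s => z s β) τ) :=
    .fun_sum fun a _ => .fun_sum fun b _ => ((hgz a b).mul (hz' a)).mul (hz'_conj b)
  exact (reCLM.differentiable.comp hQ σ).sqrt (Real.sqrt_pos.1 hL).ne'

theorem D2z_eq_D2x_add_D2t_mul_I (hg : MetricC1 g) (hz : ContDiff ℝ 2 z) {σ : ℝ}
    (hL : 0 < curveL g z σ) (a : Fin n) :
    D2z g z a σ = D2x g z a σ + D2t g z a σ * I := by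
  have hza (τ : ℝ) : DifferentiableAt ℝ (fun s => z s a) τ :=
    (contDiff_pi.1 hz a).differentiable two_ne_zero τ
  have hF : DifferentiableAt ℝ (fun τ => (curveL g z τ : ℂ)⁻¹ * deriv (fun s => z s a) τ) σ :=
    ((curveL_differentiableAt hg hz hL).hasDerivAt.ofReal_comp.differentiableAt.inv
      (by exact_mod_cast hL.ne')).mul ((contDiff_pi.1 hz a).differentiable_deriv_two σ)
  have hre : (fun τ => ((curveL g z τ : ℂ)⁻¹ * deriv (fun s => z s a) τ).re) =
      fun τ => (curveL g z τ)⁻¹ * deriv (fun s => (z s a).re) τ := by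
    ext τ
    rw [← ofReal_inv, re_ofReal_mul, deriv_complex_re (hza τ)]
  have him : (fun τ => ((curveL g z τ : ℂ)⁻¹ * deriv (fun s => z s a) τ).im) =
      fun τ => (curveL g z τ)⁻¹ * deriv (fun s => (z s a).im) τ := by
    ext τ
    rw [← ofReal_inv, im_ofReal_mul, deriv_complex_im (hza τ)]
  rw [D2z, D2x, D2t, deriv_eq_deriv_re_add_deriv_im_mul_I hF, hre, him]
  push_cast
  ring

end Curves

/-- Real part of the dual identity: along a complex geodesic,
`Σ g^R_{μγ̄} D²x^μ − Σ g^I_{μγ̄} D²t^μ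
  = Σ Φ^{γ++} Dx Dx + Σ (½∂^x_γ g^R − Φ^{γ--}) Dt Dt − Σ (F^x_{αγβ} + ∂^t_α g^R_{βγ̄}) Dt^α Dx^β`. -/
theorem dual_identity_real_part {n : ℕ}
    (g : (Fin n → ℂ) → Matrix (Fin n) (Fin n) ℂ)
    (hg : MetricC1 g) (hherm : IsHermitianMetric g)
    (z : ℝ → Fin n → ℂ) (hz : ContDiff ℝ 2 z)
    (hL : ∀ σ, 0 < curveL g z σ) (hgeo : GeodesicEq g z)
    (γ : Fin n) (σ : ℝ) :
    (∑ μ, gR g μ γ (z σ) * (D2x g z μ σ : ℂ)) -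
        ∑ μ, gI g μ γ (z σ) * (D2t g z μ σ : ℂ) =
      (∑ α, ∑ β, PhiPP g γ α β (z σ) * (Dx g z α σ : ℂ) * (Dx g z β σ : ℂ)) +
        (∑ α, ∑ β, (dX γ (gR g α β) (z σ) / 2 - PhiMM g γ α β (z σ)) *
          (Dt g z α σ : ℂ) * (Dt g z β σ : ℂ)) -
        ∑ α, ∑ β, (Fx g α γ β (z σ) + dT α (gR g β γ) (z σ)) *
          (Dt g z α σ : ℂ) * (Dx g z β σ : ℂ) := by
  have hgeo_re := congrArg re (hgeo γ σ)
  simp only [Dz_eq_Dx_add_Dt_mul_I (hz.differentiable two_ne_zero),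
    D2z_eq_D2x_add_D2t_mul_I hg hz (hL σ), dW, dWbar] at hgeo_re
  rw [re_geodesic_rhs (fun c i j => dX c (gF g i j) (z σ)) (fun c i j => dT c (gF g i j) (z σ))
    (hherm.dX_swap · · · _) (hherm.dT_swap · · · _),
    re_sum_mul_ofReal_add_ofReal_mul_I] at hgeo_re
  simp only [PhiPP, PhiMM, Fx, dX_gR hg, dX_gI hg, dT_gR hg, dT_gI hg, gR, gI]
  exact_mod_cast hgeo_re
end
end

section
/- (Imaginary part of the dual identity.) Let g be a pointwise-hermitian C¹ metric on ℂⁿ with g = g^R + i·g^I, and let z = x + it : ℝ → ℂⁿ be a C² curve with L(σ) > 0 satisfying the complex geodesic equation. Then for every index γ and every σ: Σ_μ g^R_{μγ̄}(z) D²t^μ + Σ_μ g^I_{μγ̄}(z) D²x^μ = Σ_{α,β} (Φ^{γ+-}_{αβ} + ½·∂^t_γ g^R_{αβ̄}) Dx^α Dx^β + Σ_{α,β} Φ^{γ-+}_{αβ} Dt^α Dt^β − Σ_{α,β} (∂^x_β g^R_{αγ̄} − F^t_{βγα}) Dt^α Dx^β, all coefficient functions evaluated at z(σ). -/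
open Complex

noncomputable section

/-! The identity is the imaginary part of the geodesic equation. Hermitian symmetry gives
`∂g_{βᾱ} = conj ∂g_{αβ̄}` for the real partial derivatives, so `∂g^R` is symmetric and `∂g^I`
antisymmetric in the metric indices; with `Dz = Dx + i Dt` the imaginary part of the force term
is a sum of quadratic forms in `(Dx, Dt)`. Such a form only sees the symmetric part of its
coefficients, and after symmetrising in `(α, β)` the two sides agree summand by summand. -/

open ComplexConjugate

theorem Finset.sum_sum_eq_of_add_swap {ι M : Type*} [Fintype ι] [AddCommMonoid M]
    [IsAddTorsionFree M] {f h : ι → ι → M} (hfh : ∀ a b, f a b + f b a = h a b + h b a) :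
    ∑ a, ∑ b, f a b = ∑ a, ∑ b, h a b := by
  have two_nsmul_eq : ∀ k : ι → ι → M, 2 • ∑ a, ∑ b, k a b = ∑ a, ∑ b, (k a b + k b a) := by
    intro k
    rw [two_nsmul]
    nth_rw 2 [Finset.sum_comm]
    simp only [← Finset.sum_add_distrib]
  apply nsmul_right_injective two_ne_zero
  simp only [two_nsmul_eq, hfh]

theorem deriv_ofReal_re_comp {F : ℝ → ℂ} {x : ℝ} (hF : DifferentiableAt ℝ F x) :
    deriv (fun s => ((F s).re : ℂ)) x = ((deriv F x).re : ℂ) :=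
  ((reCLM.hasFDerivAt.comp_hasDerivAt x hF.hasDerivAt).ofReal_comp).deriv

theorem deriv_ofReal_im_comp {F : ℝ → ℂ} {x : ℝ} (hF : DifferentiableAt ℝ F x) :
    deriv (fun s => ((F s).im : ℂ)) x = ((deriv F x).im : ℂ) :=
  ((imCLM.hasFDerivAt.comp_hasDerivAt x hF.hasDerivAt).ofReal_comp).deriv

theorem deriv_re_comp {F : ℝ → ℂ} {x : ℝ} (hF : DifferentiableAt ℝ F x) :
    deriv (fun s => (F s).re) x = (deriv F x).re :=
  (reCLM.hasFDerivAt.comp_hasDerivAt x hF.hasDerivAt).deriv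

theorem deriv_im_comp {F : ℝ → ℂ} {x : ℝ} (hF : DifferentiableAt ℝ F x) :
    deriv (fun s => (F s).im) x = (deriv F x).im :=
  (imCLM.hasFDerivAt.comp_hasDerivAt x hF.hasDerivAt).deriv

section Metric

variable {n : ℕ} {g : (Fin n → ℂ) → Matrix (Fin n) (Fin n) ℂ}

theorem dX_gR_eq_re (hg : MetricC1 g) (k i j : Fin n) (w : Fin n → ℂ) :
    dX k (gR g i j) w = ((dX k (gF g i j) w).re : ℂ) :=
  deriv_ofReal_re_comp (((hg i j).differentiable one_ne_zero).differentiableAt.comp 0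
    (by fun_prop))

theorem dX_gI_eq_im (hg : MetricC1 g) (k i j : Fin n) (w : Fin n → ℂ) :
    dX k (gI g i j) w = ((dX k (gF g i j) w).im : ℂ) :=
  deriv_ofReal_im_comp (((hg i j).differentiable one_ne_zero).differentiableAt.comp 0
    (by fun_prop))

theorem dT_gR_eq_re (hg : MetricC1 g) (k i j : Fin n) (w : Fin n → ℂ) :
    dT k (gR g i j) w = ((dT k (gF g i j) w).re : ℂ) :=
  deriv_ofReal_re_comp (((hg i j).differentiable one_ne_zero).differentiableAt.comp 0
    (by fun_prop))

theorem dT_gI_eq_im (hg : MetricC1 g) (k i j : Fin n) (w : Fin n → ℂ) :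
    dT k (gI g i j) w = ((dT k (gF g i j) w).im : ℂ) :=
  deriv_ofReal_im_comp (((hg i j).differentiable one_ne_zero).differentiableAt.comp 0
    (by fun_prop))

theorem gF_swap (hherm : IsHermitianMetric g) (i j : Fin n) :
    gF g j i = fun w => conj (gF g i j w) :=
  funext fun w => hherm w j i

theorem dX_gF_swap (hherm : IsHermitianMetric g) (k i j : Fin n) (w : Fin n → ℂ) :
    dX k (gF g j i) w = conj (dX k (gF g i j) w) := by
  rw [dX, gF_swap hherm]
  exact deriv.star

theorem dT_gF_swap (hherm : IsHermitianMetric g) (k i j : Fin n) (w : Fin n → ℂ) :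
    dT k (gF g j i) w = conj (dT k (gF g i j) w) := by
  rw [dT, gF_swap hherm]
  exact deriv.star

def geodesicForce (g : (Fin n → ℂ) → Matrix (Fin n) (Fin n) ℂ) (γ : Fin n)
    (w ζ : Fin n → ℂ) : ℂ :=
  (∑ α, ∑ β, (dWbar γ (gF g α β) w - dWbar β (gF g α γ) w) * ζ α * conj (ζ β)) -
    ∑ α, ∑ β, dW α (gF g β γ) w * ζ α * ζ β

theorem im_geodesicForce (hg : MetricC1 g) (hherm : IsHermitianMetric g) (γ : Fin n)
    (w ζ : Fin n → ℂ) :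
    ((geodesicForce g γ w ζ).im : ℂ) =
      (∑ α, ∑ β, (PhiPM g γ α β w + dT γ (gR g α β) w / 2) *
          ((ζ α).re : ℂ) * ((ζ β).re : ℂ)) +
        (∑ α, ∑ β, PhiMP g γ α β w * ((ζ α).im : ℂ) * ((ζ β).im : ℂ)) -
        ∑ α, ∑ β, (dX β (gR g α γ) w - Ft g β γ α w) * ((ζ α).im : ℂ) * ((ζ β).re : ℂ) := by
  simp only [PhiPM, PhiMP, Ft, dX_gR_eq_re hg, dX_gI_eq_im hg, dT_gR_eq_re hg, dT_gI_eq_im hg]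
  norm_cast
  simp only [geodesicForce, sub_im, im_sum, ← Finset.sum_sub_distrib, ← Finset.sum_add_distrib]
  refine Finset.sum_sum_eq_of_add_swap fun α β => ?_
  simp only [dWbar, dW, dX_gF_swap hherm γ α β, dT_gF_swap hherm γ α β, mul_re, mul_im,
    add_re, add_im, sub_re, sub_im, div_ofNat_re, div_ofNat_im, conj_re, conj_im, I_re, I_im]
  ring

end Metric

section Curve

variable {n : ℕ} {g : (Fin n → ℂ) → Matrix (Fin n) (Fin n) ℂ} {z : ℝ → Fin n → ℂ}

theorem differentiable_coord (hz : ContDiff ℝ 2 z) (α : Fin n) :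
    Differentiable ℝ (fun τ => z τ α) :=
  differentiable_pi.1 (hz.differentiable two_ne_zero) α

theorem differentiable_deriv_coord (hz : ContDiff ℝ 2 z) (α : Fin n) :
    Differentiable ℝ (deriv fun τ => z τ α) :=
  (contDiff_pi.1 hz α).differentiable_deriv_two

theorem differentiableAt_curveL (hg : MetricC1 g) (hz : ContDiff ℝ 2 z) {σ : ℝ}
    (hσ : 0 < curveL g z σ) : DifferentiableAt ℝ (curveL g z) σ := by
  have hgz : ∀ α β, Differentiable ℝ (fun τ => g (z τ) α β) := fun α β =>
    ((hg α β).differentiable one_ne_zero).comp (hz.differentiable two_ne_zero)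
  have hz' := fun α => differentiable_deriv_coord hz α
  refine DifferentiableAt.sqrt ?_ (Real.sqrt_pos.1 hσ).ne'
  refine (Complex.differentiable_re _).comp σ
    (DifferentiableAt.fun_sum fun α _ => DifferentiableAt.fun_sum fun β _ => ?_)
  exact ((hgz α β σ).mul (hz' α σ)).mul (hz' β σ).star

theorem re_Dz (hz : ContDiff ℝ 2 z) (α : Fin n) (σ : ℝ) : (Dz g z α σ).re = Dx g z α σ := by
  rw [Dz, Dx, deriv_re_comp (differentiable_coord hz α σ), ← ofReal_inv, re_ofReal_mul]

theorem im_Dz (hz : ContDiff ℝ 2 z) (α : Fin n) (σ : ℝ) : (Dz g z α σ).im = Dt g z α σ := by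
  rw [Dz, Dt, deriv_im_comp (differentiable_coord hz α σ), ← ofReal_inv, im_ofReal_mul]

theorem differentiableAt_Dz (hg : MetricC1 g) (hz : ContDiff ℝ 2 z) {σ : ℝ}
    (hσ : 0 < curveL g z σ) (α : Fin n) : DifferentiableAt ℝ (Dz g z α) σ := by
  have hL := differentiableAt_curveL hg hz hσ
  have hz' := differentiable_deriv_coord hz α
  refine DifferentiableAt.mul ?_ (hz' σ)
  exact ((Complex.differentiable_ofReal _).comp σ hL).inv (ofReal_ne_zero.2 hσ.ne')

theorem re_D2z (hg : MetricC1 g) (hz : ContDiff ℝ 2 z) {σ : ℝ} (hσ : 0 < curveL g z σ)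
    (α : Fin n) : (D2z g z α σ).re = D2x g z α σ := by
  have hDx : (fun τ => (curveL g z τ)⁻¹ * deriv (fun s => (z s α).re) τ) =
      fun τ => (Dz g z α τ).re := funext fun τ => (re_Dz hz α τ).symm
  rw [D2z, D2x, hDx, deriv_re_comp (differentiableAt_Dz hg hz hσ α), ← ofReal_inv,
    re_ofReal_mul]
  rfl

theorem im_D2z (hg : MetricC1 g) (hz : ContDiff ℝ 2 z) {σ : ℝ} (hσ : 0 < curveL g z σ)
    (α : Fin n) : (D2z g z α σ).im = D2t g z α σ := by
  have hDt : (fun τ => (curveL g z τ)⁻¹ * deriv (fun s => (z s α).im) τ) =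
      fun τ => (Dz g z α τ).im := funext fun τ => (im_Dz hz α τ).symm
  rw [D2z, D2t, hDt, deriv_im_comp (differentiableAt_Dz hg hz hσ α), ← ofReal_inv,
    im_ofReal_mul]
  rfl

theorem im_sum_mul_D2z (hg : MetricC1 g) (hz : ContDiff ℝ 2 z) {σ : ℝ}
    (hσ : 0 < curveL g z σ) (γ : Fin n) :
    ((∑ μ, g (z σ) μ γ * D2z g z μ σ).im : ℂ) =
      (∑ μ, gR g μ γ (z σ) * (D2t g z μ σ : ℂ)) + ∑ μ, gI g μ γ (z σ) * (D2x g z μ σ : ℂ) := by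
  simp only [im_sum, mul_im, re_D2z hg hz hσ, im_D2z hg hz hσ, gR, gI]
  push_cast
  exact Finset.sum_add_distrib

end Curve

/-- Imaginary part of the dual identity: along a complex geodesic,
`Σ g^R_{μγ̄} D²t^μ + Σ g^I_{μγ̄} D²x^μ
  = Σ (Φ^{γ+-} + ½∂^t_γ g^R) Dx Dx + Σ Φ^{γ-+} Dt Dt − Σ (∂^x_β g^R_{αγ̄} − F^t_{βγα}) Dt^α Dx^β`. -/
theorem dual_identity_imag_part {n : ℕ}
    (g : (Fin n → ℂ) → Matrix (Fin n) (Fin n) ℂ)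
    (hg : MetricC1 g) (hherm : IsHermitianMetric g)
    (z : ℝ → Fin n → ℂ) (hz : ContDiff ℝ 2 z)
    (hL : ∀ σ, 0 < curveL g z σ) (hgeo : GeodesicEq g z)
    (γ : Fin n) (σ : ℝ) :
    (∑ μ, gR g μ γ (z σ) * (D2t g z μ σ : ℂ)) +
        ∑ μ, gI g μ γ (z σ) * (D2x g z μ σ : ℂ) =
      (∑ α, ∑ β, (PhiPM g γ α β (z σ) + dT γ (gR g α β) (z σ) / 2) *
          (Dx g z α σ : ℂ) * (Dx g z β σ : ℂ)) +
        (∑ α, ∑ β, PhiMP g γ α β (z σ) * (Dt g z α σ : ℂ) * (Dt g z β σ : ℂ)) -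
        ∑ α, ∑ β, (dX β (gR g α γ) (z σ) - Ft g β γ α (z σ)) *
          (Dt g z α σ : ℂ) * (Dx g z β σ : ℂ) := by
  have hforce : ∑ μ, g (z σ) μ γ * D2z g z μ σ =
      geodesicForce g γ (z σ) (fun α => Dz g z α σ) := hgeo γ σ
  have him := congrArg (fun w : ℂ => (w.im : ℂ)) hforce
  simp only [im_sum_mul_D2z hg hz (hL σ), im_geodesicForce hg hherm, re_Dz hz, im_Dz hz] at him
  exact him
end
end
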